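/- Let U ⊆ ℝ⁴ be open with coordinates (x,p,y,q), Ω = dp∧dx + dq∧dy, D a smooth function on U, and D the 2-distribution spanned by ∂_p and ∂_x − D∂_q, with invariant forms ρ = −D_p dy, ρ' = −D_q dx, σ = ρ − ρ'. Then, as 4-forms on U: dσ ∧ dσ = 2(D_{pp}D_{qq} − D_{pq}²)·(½Ω∧Ω), dσ ∧ dρ = (D_{pp}D_{qq} − D_{pq}²)·(½Ω∧Ω), and σ∧ρ∧dσ = σ∧ρ∧dρ = dρ∧dρ = 0. Hence the scalar invariants satisfy I⁴_D = −2D_{pq}² + 2D_{pp}D_{qq}, I⁵_D = ½ I⁴_D, and I²_D = I³_D = I⁶_D = 0. -/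

import Mathlib

/-!
Since `d(-f dxᵢ) = dxᵢ ∧ df`, we get `dρ = dy ∧ dD_p`, `dρ' = dx ∧ dD_q` and `dσ = dρ - dρ'`.
The forms `σ` and `ρ` lie in the plane spanned by `dx` and `dy`, so `σ ∧ ρ` is a multiple of
`dx ∧ dy` and is killed by `dy ∧ dD_p` and by `dx ∧ dD_q`; likewise `dρ ∧ dρ` has a repeated factor.
What survives in `dσ ∧ dσ` and `dσ ∧ dρ` is `dy ∧ dD_p ∧ dx ∧ dD_q`, in which only the `(p, q)`
block of the Hessian of `D` appears; by symmetry of the Hessian it is the determinant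
`D_pp D_qq - D_pq²` times the volume form.
-/

noncomputable section

/-- Vectors of `ℝ⁴`, with coordinates `(x,p,y,q) = (v 0, v 1, v 2, v 3)`. -/
abbrev Vec : Type := Fin 4 → ℝ

/-- The `i`-th standard basis vector (so `e 0 = ∂_x`, `e 1 = ∂_p`, `e 2 = ∂_y`,
`e 3 = ∂_q`). -/
def e (i : Fin 4) : Vec := Pi.single i 1

/-- The standard symplectic form `Ω = dp∧dx + dq∧dy` on `ℝ⁴`. -/
def Omega (u v : Vec) : ℝ := u 1 * v 0 - u 0 * v 1 + u 3 * v 2 - u 2 * v 3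

/-- Partial derivative in the `i`-th coordinate direction. -/
def pd (i : Fin 4) (f : Vec → ℝ) : Vec → ℝ := fun z => fderiv ℝ f z (e i)

/-- Lie bracket of vector fields. -/
def vbracket (X Y : Vec → Vec) : Vec → Vec :=
  fun x => fderiv ℝ Y x (X x) - fderiv ℝ X x (Y x)

/-- Exterior derivative of a 1-form (a pointwise family of 1-form values). -/
def d1 (α : Vec → Vec → ℝ) : Vec → Vec → Vec → ℝ :=
  fun x u v => fderiv ℝ (fun y => α y v) x u - fderiv ℝ (fun y => α y u) x v

/-- Wedge product of two 1-form values. -/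
def w11 (a b : Vec → ℝ) : Vec → Vec → ℝ := fun u v => a u * b v - a v * b u

/-- Wedge product of two 2-form values. -/
def w22 (a b : Vec → Vec → ℝ) : Vec → Vec → Vec → Vec → ℝ :=
  fun u v w z => a u v * b w z - a u w * b v z + a u z * b v w
    + a v w * b u z - a v z * b u w + a w z * b u v

theorem clm_apply_eq_coord_sum (L : Vec →L[ℝ] ℝ) (v : Vec) :
    L v = v 0 * L (e 0) + v 1 * L (e 1) + v 2 * L (e 2) + v 3 * L (e 3) := by
  conv_lhs => rw [pi_eq_sum_univ' v]
  simp [Fin.sum_univ_four, e]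

section Wedge

variable (A B C : Vec → Vec → ℝ) (u v w x : Vec)

theorem w22_sub_left : w22 (A - B) C u v w x = w22 A C u v w x - w22 B C u v w x := by
  simp only [w22, Pi.sub_apply]; ring

theorem w22_sub_right : w22 A (B - C) u v w x = w22 A B u v w x - w22 A C u v w x := by
  simp only [w22, Pi.sub_apply]; ring

theorem w22_comm : w22 A B u v w x = w22 B A u v w x := by
  simp only [w22]; ring

theorem w22_w11_self (α β : Vec → ℝ) : w22 (w11 α β) (w11 α β) u v w x = 0 := by
  simp only [w22, w11]; ring

theorem w22_w11_w11_eq_zero_of_span {ξ η α β γ : Vec → ℝ} {a₁ a₂ b₁ b₂ c₁ c₂ : ℝ}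
    (hα : ∀ v, α v = a₁ * ξ v + a₂ * η v) (hβ : ∀ v, β v = b₁ * ξ v + b₂ * η v)
    (hγ : ∀ v, γ v = c₁ * ξ v + c₂ * η v) (δ : Vec → ℝ) :
    w22 (w11 α β) (w11 γ δ) u v w x = 0 := by
  simp only [w22, w11, hα, hβ, hγ]; ring

theorem w22_dy_wedge_dx_wedge (L M : Vec →L[ℝ] ℝ) :
    w22 (w11 (· 2) L) (w11 (· 0) M) u v w x
      = (L (e 3) * M (e 1) - L (e 1) * M (e 3)) * (w22 Omega Omega u v w x / 2) := by
  have hL := clm_apply_eq_coord_sum L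
  have hM := clm_apply_eq_coord_sum M
  simp only [w22, w11, Omega]
  rw [hL u, hL v, hL w, hL x, hM u, hM v, hM w, hM x]
  ring

variable {L M : Vec →L[ℝ] ℝ}

theorem w22_dy_sub_dx_self (hLM : M (e 1) = L (e 3)) :
    w22 (w11 (· 2) L - w11 (· 0) M) (w11 (· 2) L - w11 (· 0) M) u v w x
      = 2 * (L (e 1) * M (e 3) - L (e 3) ^ 2) * (w22 Omega Omega u v w x / 2) := by
  rw [w22_sub_left, w22_sub_right, w22_sub_right, w22_comm (w11 _ M), w22_w11_self,
    w22_w11_self, w22_dy_wedge_dx_wedge, hLM]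
  ring

theorem w22_dy_sub_dx_dy (hLM : M (e 1) = L (e 3)) :
    w22 (w11 (· 2) L - w11 (· 0) M) (w11 (· 2) L) u v w x
      = (L (e 1) * M (e 3) - L (e 3) ^ 2) * (w22 Omega Omega u v w x / 2) := by
  rw [w22_sub_left, w22_w11_self, w22_comm, w22_dy_wedge_dx_wedge, hLM]
  ring

end Wedge

section Calculus

variable {α β : Vec → Vec → ℝ} {f D : Vec → ℝ} {z : Vec}

theorem d1_sub (hα : ∀ v, DifferentiableAt ℝ (fun y => α y v) z)
    (hβ : ∀ v, DifferentiableAt ℝ (fun y => β y v) z) :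
    d1 (fun y v => α y v - β y v) z = d1 α z - d1 β z := by
  funext u v
  simp only [d1, Pi.sub_apply, fderiv_fun_sub (hα _) (hβ _), sub_apply]
  ring

theorem d1_neg_mul (hf : DifferentiableAt ℝ f z) (ℓ : Vec → ℝ) :
    d1 (fun y v => -f y * ℓ v) z = w11 ℓ (fderiv ℝ f z) := by
  funext u v
  simp only [d1, w11, neg_mul, fderiv_fun_neg, fderiv_mul_const hf, neg_apply,
    smul_apply, smul_eq_mul]
  ring

theorem differentiableAt_pd (hD : ContDiffAt ℝ 2 D z) (i : Fin 4) :
    DifferentiableAt ℝ (pd i D) z :=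
  ((hD.fderiv_right (m := 1) le_rfl).clm_apply contDiffAt_const).differentiableAt one_ne_zero

theorem fderiv_pd_apply (hD : DifferentiableAt ℝ (fderiv ℝ D) z) (i : Fin 4) (v : Vec) :
    fderiv ℝ (pd i D) z v = fderiv ℝ (fderiv ℝ D) z v (e i) := by
  change fderiv ℝ (fun y => fderiv ℝ D y (e i)) z v = _
  simp [fderiv_clm_apply hD (differentiableAt_const _)]

theorem pd_pd_comm (hD : ContDiffAt ℝ 2 D z) (i j : Fin 4) :
    pd i (pd j D) z = pd j (pd i D) z := by
  have hsymm : IsSymmSndFDerivAt ℝ D z :=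
    hD.isSymmSndFDerivAt (by simp [minSmoothness_of_isRCLikeNormedField])
  have hdf : DifferentiableAt ℝ (fderiv ℝ D) z :=
    (hD.fderiv_right (m := 1) le_rfl).differentiableAt one_ne_zero
  simp only [pd, fderiv_pd_apply hdf]
  exact hsymm (e i) (e j)

end Calculus

/-- for the 2-distribution `⟨∂_p, ∂_x − D∂_q⟩` with invariant forms
`ρ = −D_p dy`, `ρ' = −D_q dx`, `σ = ρ − ρ'`, as 4-forms on `U`:
`dσ∧dσ = 2(D_{pp}D_{qq} − D_{pq}²)·(½Ω∧Ω)`,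
`dσ∧dρ = (D_{pp}D_{qq} − D_{pq}²)·(½Ω∧Ω)`, and
`σ∧ρ∧dσ = σ∧ρ∧dρ = dρ∧dρ = 0`; hence `I⁴ = −2D_{pq}² + 2D_{pp}D_{qq}`,
`I⁵ = ½I⁴` and `I² = I³ = I⁶ = 0`. -/
theorem stmt_17 (U : Set Vec) (hU : IsOpen U)
    (D : Vec → ℝ) (hD : ContDiffOn ℝ (⊤ : ℕ∞) D U)
    (ρ ρ' σ : Vec → Vec → ℝ)
    (hρ : ρ = fun z v => -(pd 1 D z) * v 2)
    (hρ' : ρ' = fun z v => -(pd 3 D z) * v 0)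
    (hσ : σ = fun z v => ρ z v - ρ' z v) :
    ∀ z ∈ U, ∀ a b c d : Vec,
      w22 (d1 σ z) (d1 σ z) a b c d
        = 2 * (pd 1 (pd 1 D) z * pd 3 (pd 3 D) z - pd 3 (pd 1 D) z ^ 2)
            * (w22 Omega Omega a b c d / 2) ∧
      w22 (d1 σ z) (d1 ρ z) a b c d
        = (pd 1 (pd 1 D) z * pd 3 (pd 3 D) z - pd 3 (pd 1 D) z ^ 2)
            * (w22 Omega Omega a b c d / 2) ∧
      w22 (w11 (σ z) (ρ z)) (d1 σ z) a b c d = 0 ∧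
      w22 (w11 (σ z) (ρ z)) (d1 ρ z) a b c d = 0 ∧
      w22 (d1 ρ z) (d1 ρ z) a b c d = 0 := by
  intro z hz a b c d
  have hDz : ContDiffAt ℝ 2 D z :=
    (hD.contDiffAt (hU.mem_nhds hz)).of_le (WithTop.coe_le_coe.mpr le_top)
  have hDp := differentiableAt_pd hDz 1
  have hDq := differentiableAt_pd hDz 3
  have hdρ : d1 ρ z = w11 (· 2) (fderiv ℝ (pd 1 D) z) := hρ ▸ d1_neg_mul hDp _
  have hdρ' : d1 ρ' z = w11 (· 0) (fderiv ℝ (pd 3 D) z) := hρ' ▸ d1_neg_mul hDq _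
  have hdσ : d1 σ z = d1 ρ z - d1 ρ' z := by
    subst hσ hρ hρ'
    exact d1_sub (fun _ => hDp.neg.mul_const _) (fun _ => hDq.neg.mul_const _)
  have hσz : ∀ v, σ z v = pd 3 D z * v 0 + -pd 1 D z * v 2 := fun v => by
    simp only [hσ, hρ, hρ']; ring
  have hρz : ∀ v, ρ z v = 0 * v 0 + -pd 1 D z * v 2 := fun v => by
    simp only [hρ]; ring
  have hdx : ∀ v : Vec, v 0 = 1 * v 0 + 0 * v 2 := fun v => by ring
  have hdy : ∀ v : Vec, v 2 = 0 * v 0 + 1 * v 2 := fun v => by ring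
  have hsymm := pd_pd_comm hDz 1 3
  rw [hdσ, hdρ, hdρ']
  refine ⟨w22_dy_sub_dx_self _ _ _ _ hsymm, w22_dy_sub_dx_dy _ _ _ _ hsymm, ?_,
    w22_w11_w11_eq_zero_of_span _ _ _ _ hσz hρz hdy _, w22_w11_self _ _ _ _ _ _⟩
  rw [w22_sub_right, w22_w11_w11_eq_zero_of_span _ _ _ _ hσz hρz hdy,
    w22_w11_w11_eq_zero_of_span _ _ _ _ hσz hρz hdx, sub_zero]
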